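/- For every integer r ≥ 1, the sequence (1, r, C(r+1,2), C(r,2)+1) is a pure O-sequence, where C(n,k) denotes the binomial coefficient. -/

import Mathlib

/-- The degree of a monomial, modeled as a finitely supported exponent vector. -/
def monDeg {r : ℕ} (m : Fin r →₀ ℕ) : ℕ := m.sum fun _ e => e

/-- A (monomial) order ideal: a finite nonempty set of monomials closed under divisibility. -/
def IsOrderIdeal {r : ℕ} (X : Finset (Fin r →₀ ℕ)) : Prop :=
  X.Nonempty ∧ ∀ m ∈ X, ∀ n : Fin r →₀ ℕ, n ≤ m → n ∈ X

/-- An order ideal is pure if all its maximal monomials (w.r.t. divisibility) have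
the same degree. -/
def IsPureSet {r : ℕ} (X : Finset (Fin r →₀ ℕ)) : Prop :=
  ∀ m ∈ X, ∀ n ∈ X, (∀ p ∈ X, m ≤ p → p = m) → (∀ p ∈ X, n ≤ p → p = n) →
    monDeg m = monDeg n

/-- The number of monomials of `X` of degree `i`. -/
def degCount {r : ℕ} (X : Finset (Fin r →₀ ℕ)) (i : ℕ) : ℕ :=
  (X.filter fun m => monDeg m = i).card

/-- `h` is the h-vector `(h_0, …, h_e)` of `X`, where `e` is the top degree of `X`. -/
def IsHVectorOf {r : ℕ} (X : Finset (Fin r →₀ ℕ)) (h : List ℕ) : Prop :=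
  h ≠ [] ∧ (∀ i, degCount X i = h.getD i 0) ∧ degCount X (h.length - 1) ≠ 0

/-- A finite sequence is an O-sequence if it is the h-vector of a monomial order ideal. -/
def IsOSequence (h : List ℕ) : Prop :=
  ∃ (r : ℕ) (X : Finset (Fin r →₀ ℕ)), IsOrderIdeal X ∧ IsHVectorOf X h

/-- A finite sequence is a pure O-sequence if it is the h-vector of a pure monomial
order ideal. -/
def IsPureOSequence (h : List ℕ) : Prop :=
  ∃ (r : ℕ) (X : Finset (Fin r →₀ ℕ)), IsOrderIdeal X ∧ IsPureSet X ∧ IsHVectorOf X h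

/-!
Take the order ideal generated by `x₀³` and by all `x₀ n` with `n` a quadratic monomial in the
other `r - 1` variables. Every monomial of degree at most two divides one of these generators,
so the ideal contains all `1, r, C(r+1, 2)` monomials of degrees `0, 1, 2`, while its degree-3
part consists of the `C(r, 2) + 1` generators themselves. An order ideal generated in a single
degree is pure, since each of its maximal elements is one of the generators.
-/

open Finset Finsupp

section DownClosure

variable {r : ℕ}

lemma monDeg_eq_degree (m : Fin r →₀ ℕ) : monDeg m = m.degree := rfl

lemma eq_of_le_of_monDeg_le {m n : Fin r →₀ ℕ} (hmn : m ≤ n) (hdeg : monDeg n ≤ monDeg m) :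
    m = n := by
  obtain ⟨d, rfl⟩ := le_iff_exists_add.mp hmn
  rw [monDeg_eq_degree, monDeg_eq_degree, map_add] at hdeg
  rw [(degree_eq_zero_iff d).mp (by omega), add_zero]

lemma degCount_eq_choose {X : Finset (Fin r →₀ ℕ)} {i : ℕ}
    (hX : ∀ m, monDeg m = i → m ∈ X) : degCount X i = (r + i - 1).choose i := by
  have : X.filter (fun m => monDeg m = i) = univ.finsuppAntidiag i := by
    refine Finset.ext fun m => ?_
    rw [Finset.mem_filter, mem_finsuppAntidiag']
    exact ⟨fun hm => ⟨hm.2, subset_univ _⟩, fun hm => ⟨hX m hm.1, hm.1⟩⟩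
  rw [degCount, this, card_finsuppAntidiag_nat_eq_choose, card_univ, Fintype.card_fin]

noncomputable def downClosure (G : Finset (Fin r →₀ ℕ)) : Finset (Fin r →₀ ℕ) :=
  G.biUnion Iic

variable {G : Finset (Fin r →₀ ℕ)} {e : ℕ}

lemma mem_downClosure {m : Fin r →₀ ℕ} : m ∈ downClosure G ↔ ∃ g ∈ G, m ≤ g := by
  simp [downClosure]

lemma isOrderIdeal_downClosure (hG : G.Nonempty) : IsOrderIdeal (downClosure G) := by
  obtain ⟨g, hg⟩ := hG
  refine ⟨⟨g, mem_downClosure.2 ⟨g, hg, le_rfl⟩⟩, fun m hm n hnm => ?_⟩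
  obtain ⟨g, hg, hmg⟩ := mem_downClosure.1 hm
  exact mem_downClosure.2 ⟨g, hg, hnm.trans hmg⟩

lemma isPureSet_downClosure (hG : ∀ g ∈ G, monDeg g = e) : IsPureSet (downClosure G) := by
  have hmax : ∀ m ∈ downClosure G, (∀ p ∈ downClosure G, m ≤ p → p = m) → monDeg m = e := by
    intro m hm hmax
    obtain ⟨g, hg, hmg⟩ := mem_downClosure.1 hm
    rw [← hmax g (mem_downClosure.2 ⟨g, hg, le_rfl⟩) hmg, hG g hg]
  intro m hm n hn hm' hn'
  rw [hmax m hm hm', hmax n hn hn']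

lemma degCount_downClosure_self (hG : ∀ g ∈ G, monDeg g = e) :
    degCount (downClosure G) e = #G := by
  rw [degCount]
  congr 1
  ext m
  simp only [mem_filter, mem_downClosure]
  constructor
  · rintro ⟨⟨g, hg, hmg⟩, hm⟩
    rwa [eq_of_le_of_monDeg_le hmg (by rw [hm, hG g hg])]
  · intro hm
    exact ⟨⟨m, hm, le_rfl⟩, hG m hm⟩

lemma degCount_downClosure_of_lt (hG : ∀ g ∈ G, monDeg g = e) {i : ℕ} (hi : e < i) :
    degCount (downClosure G) i = 0 := by
  rw [degCount, card_eq_zero, filter_eq_empty_iff]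
  intro m hm
  obtain ⟨g, hg, hmg⟩ := mem_downClosure.1 hm
  have := degree_mono hmg
  rw [← monDeg_eq_degree, ← monDeg_eq_degree, hG g hg] at this
  omega

theorem isPureOSequence_downClosure (hne : G.Nonempty) (hG : ∀ g ∈ G, monDeg g = e) :
    IsPureOSequence ((List.range (e + 1)).map (degCount (downClosure G))) := by
  refine ⟨r, downClosure G, isOrderIdeal_downClosure hne, isPureSet_downClosure hG,
    by simp, fun i => ?_, ?_⟩
  · rcases lt_or_ge e i with hi | hi
    · rw [degCount_downClosure_of_lt hG hi, List.getD_eq_default]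
      simpa using hi
    · rw [List.getD_eq_getElem _ _ (by simpa using Nat.lt_succ_of_le hi)]
      simp
  · simpa [degCount_downClosure_self hG] using hne.ne_empty

end DownClosure

section CubicGenerators

variable {k : ℕ}

lemma monDeg_cons (a : ℕ) (n : Fin k →₀ ℕ) : monDeg (cons a n) = a + monDeg n :=
  sum_cons k n a

lemma cons_le_cons {a b : ℕ} {m n : Fin k →₀ ℕ} (hab : a ≤ b) (hmn : m ≤ n) :
    cons a m ≤ cons b n := by
  rw [Finsupp.le_def, Fin.forall_fin_succ]
  exact ⟨by simpa using hab, fun i => by simpa using hmn i⟩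

variable (k) in
/-- `x₀³` together with `x₀ n` for every quadratic monomial `n` in the other `k` variables. -/
noncomputable def cubicGenerators : Finset (Fin (k + 1) →₀ ℕ) :=
  insert (cons 3 0) ((univ.finsuppAntidiag 2).image (cons 1))

lemma cubicGenerators_nonempty : (cubicGenerators k).Nonempty := insert_nonempty _ _

lemma monDeg_of_mem_cubicGenerators {g : Fin (k + 1) →₀ ℕ} (hg : g ∈ cubicGenerators k) :
    monDeg g = 3 := by
  simp only [cubicGenerators, mem_insert, mem_image, mem_finsuppAntidiag', subset_univ,
    and_true] at hg
  rcases hg with rfl | ⟨n, hn, rfl⟩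
  · rw [monDeg_cons, monDeg, sum_zero_index, add_zero]
  · rw [monDeg_cons, monDeg, hn]

lemma card_cubicGenerators : #(cubicGenerators k) = (k + 1).choose 2 + 1 := by
  rw [cubicGenerators, card_insert_of_notMem, card_image_of_injective _ (cons_right_injective 1),
    card_finsuppAntidiag_nat_eq_choose, card_univ, Fintype.card_fin]
  · rfl
  · intro h
    obtain ⟨n, -, hn⟩ := mem_image.1 h
    simpa using DFunLike.congr_fun hn 0

lemma exists_mem_cubicGenerators_le {m : Fin (k + 1) →₀ ℕ} (hm : monDeg m ≤ 2) :
    ∃ g ∈ cubicGenerators k, m ≤ g := by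
  rw [← cons_tail m, monDeg_cons] at hm
  by_cases htail : tail m = 0
  · refine ⟨cons 3 0, mem_insert_self _ _, ?_⟩
    rw [← cons_tail m, htail]
    exact cons_le_cons (by omega) le_rfl
  · obtain ⟨j, hj⟩ := Finsupp.ne_iff.1 htail
    rw [Finsupp.coe_zero, Pi.zero_apply] at hj
    have hj_le : tail m j ≤ monDeg (tail m) := le_degree j _
    set n := tail m + single j (2 - monDeg (tail m))
    have hn : monDeg n = 2 := by
      simp only [n, monDeg_eq_degree, map_add, degree_single] at hm ⊢
      omega
    refine ⟨cons 1 n, mem_insert_of_mem (mem_image_of_mem _ ?_), ?_⟩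
    · exact mem_finsuppAntidiag'.2 ⟨hn, subset_univ _⟩
    · rw [← cons_tail m]
      exact cons_le_cons (by omega) le_self_add

end CubicGenerators

/-- For every integer `r ≥ 1`, the sequence `(1, r, C(r+1,2), C(r,2)+1)` is a pure
O-sequence. -/
theorem pure_special_sequence (r : ℕ) (hr : 1 ≤ r) :
    IsPureOSequence [1, r, (r + 1).choose 2, r.choose 2 + 1] := by
  obtain ⟨k, rfl⟩ : ∃ k, r = k + 1 := ⟨r - 1, by omega⟩
  have hdeg : ∀ g ∈ cubicGenerators k, monDeg g = 3 := fun _ => monDeg_of_mem_cubicGenerators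
  have hlow : ∀ i ≤ 2, degCount (downClosure (cubicGenerators k)) i = (k + 1 + i - 1).choose i :=
    fun i hi => degCount_eq_choose fun m hm =>
      mem_downClosure.2 (exists_mem_cubicGenerators_le (by omega))
  have h := isPureOSequence_downClosure cubicGenerators_nonempty hdeg
  simpa [List.range_succ, hlow, degCount_downClosure_self hdeg, card_cubicGenerators] using h
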